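/- Let s, r ≥ 0 and d ≥ 1 be integers with s + r + d ≥ 2 and gcd(d, s − r − 1) = 1 (the greatest common divisor of d and |s − r − 1| in ℤ). Then for every X ∈ E(s,r,d), the only affine map leaving X invariant is the identity T(w) = w; that is, the isotropy group of every X ∈ E(s,r,d) is trivial. -/

import Mathlib

/-!
Write `T(w) = a w + b`. The invariance equation says `A · exp G = B` for the polynomials
`A = Q(T) P`, `B = a Q P(T)` and `G = E(T) - E`; differentiating, `A B G'` is the Wronskian of
`A` and `B`, whose degree is too small unless `G' = 0`. So `E(T) = E + c` and
`e^c Q(T) P = a Q P(T)`. The top coefficient of `E(T) = E + c` gives `a^d = 1`; coprimality of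
`Q` and `P` gives `Q(T) = a^s Q`, hence `a^s e^c = a^(r+1)`.

If `a ≠ 1`, evaluating `E(T) = E + c` at the fixed point of `T` gives `c = 0`, so
`a^(s-r-1) = 1 = a^d` and `a = 1` by the gcd condition. If `a = 1` and `b ≠ 0`, then `Q` and `P`
are `b`-periodic, hence constant, and `E(w + b) - E(w)` is constant, so `deg E ≤ 1`,
contradicting `s + r + d ≥ 2`.
-/

open Polynomial

noncomputable section

/-- The data `(λ, Q, P, E)` of an element `X ∈ E(s,r,d)`:
`λ ≠ 0`, `Q`, `P` monic of degrees `s`, `r` with no common roots,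
and `deg E = d`. -/
def EData (s r d : ℕ) (lam : ℂ) (Q P E : Polynomial ℂ) : Prop :=
  lam ≠ 0 ∧ Q.Monic ∧ P.Monic ∧ Q.natDegree = s ∧ P.natDegree = r ∧
    E.natDegree = d ∧ ∀ z : ℂ, ¬ (Q.IsRoot z ∧ P.IsRoot z)

/-- The affine map `T(w) = a·w + b` leaves the vector field with data `(λ,Q,P,E)`
invariant: `Q(aw+b)·P(w)·exp(E(aw+b)) = a·Q(w)·P(aw+b)·exp(E(w))` for all `w`. -/
def LeavesInv (Q P E : Polynomial ℂ) (a b : ℂ) : Prop :=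
  ∀ w : ℂ,
    Q.eval (a * w + b) * P.eval w * Complex.exp (E.eval (a * w + b)) =
      a * Q.eval w * P.eval (a * w + b) * Complex.exp (E.eval w)

theorem eq_one_of_zpow_eq_one_of_gcd_eq_one {G₀ : Type*} [GroupWithZero G₀] {x : G₀}
    (hx : x ≠ 0) {m n : ℤ} (hmn : m.gcd n = 1) (hm : x ^ m = 1) (hn : x ^ n = 1) : x = 1 := by
  have h := (pow_intGCD_eq_one (a := Units.mk0 x hx)).mpr
    ⟨Units.ext (by simpa using hm), Units.ext (by simpa using hn)⟩
  rw [hmn, pow_one] at h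
  simpa using congrArg Units.val h

namespace Polynomial

section Affine

variable {R : Type*} [CommRing R] [NoZeroDivisors R] {a b : R}

theorem natDegree_comp_C_mul_X_add_C (p : R[X]) (ha : a ≠ 0) :
    (p.comp (C a * X + C b)).natDegree = p.natDegree := by
  rw [natDegree_comp, natDegree_linear ha, mul_one]

theorem leadingCoeff_comp_C_mul_X_add_C (p : R[X]) (ha : a ≠ 0) :
    (p.comp (C a * X + C b)).leadingCoeff = p.leadingCoeff * a ^ p.natDegree := by
  rw [leadingCoeff_comp (by rw [natDegree_linear ha]; exact one_ne_zero), leadingCoeff_linear ha]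

theorem comp_C_mul_X_add_C_ne_zero (ha : a ≠ 0) {p : R[X]} (hp : p ≠ 0) :
    p.comp (C a * X + C b) ≠ 0 := by
  rw [← leadingCoeff_ne_zero, leadingCoeff_comp_C_mul_X_add_C p ha]
  exact mul_ne_zero (leadingCoeff_ne_zero.mpr hp) (pow_ne_zero _ ha)

theorem pow_natDegree_eq_one_of_comp_eq_add_C {p : R[X]} {c : R} (ha : a ≠ 0)
    (h : p.comp (C a * X + C b) = p + C c) : a ^ p.natDegree = 1 := by
  rcases Nat.eq_zero_or_pos p.natDegree with h0 | hpos
  · rw [h0, pow_zero]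
  have hp : p ≠ 0 := ne_zero_of_natDegree_gt hpos
  have hlead := congrArg leadingCoeff h
  have hdeg : (C c).degree < p.degree :=
    degree_C_le.trans_lt (natDegree_pos_iff_degree_pos.mp hpos)
  rw [leadingCoeff_comp_C_mul_X_add_C p ha, leadingCoeff_add_of_degree_lt' hdeg] at hlead
  exact mul_left_cancel₀ (leadingCoeff_ne_zero.mpr hp) (hlead.trans (mul_one _).symm)

end Affine

theorem eq_zero_of_comp_eq_add_C_of_ne_one {K : Type*} [Field K] {p : K[X]} {a b c : K}
    (ha : a ≠ 1) (h : p.comp (C a * X + C b) = p + C c) : c = 0 := by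
  have hfix : a * (b / (1 - a)) + b = b / (1 - a) := by
    field_simp [sub_ne_zero.mpr ha.symm]
    ring
  simpa [hfix] using congrArg (eval (b / (1 - a))) h

theorem natDegree_eq_zero_of_comp_X_add_C_eq {R : Type*} [CommRing R] [IsDomain R] [CharZero R]
    {p : R[X]} {b : R} (hb : b ≠ 0) (h : p.comp (X + C b) = p) : p.natDegree = 0 := by
  have hper : Function.Periodic (fun x => p.eval x) b := fun x => by
    simpa using congrArg (eval x) h
  suffices p = C (p.eval 0) by rw [this, natDegree_C]
  refine eq_of_infinite_eval_eq _ _ <| Set.Infinite.mono ?_ <|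
    Set.infinite_range_of_injective (f := fun n : ℕ => (n : R) * b) fun m n hmn => ?_
  · rintro _ ⟨n, rfl⟩
    simpa using hper.nat_mul_eq n
  · exact_mod_cast mul_right_cancel₀ hb hmn

theorem natDegree_le_one_of_comp_X_add_C_eq_add_C {K : Type*} [Field K] [CharZero K]
    {p : K[X]} {b c : K} (hb : b ≠ 0) (h : p.comp (X + C b) = p + C c) : p.natDegree ≤ 1 := by
  set q := p - C (c / b) * X
  have hq : q.comp (X + C b) = q := by
    have hc : C c = C (c / b) * C b := by rw [← C_mul, div_mul_cancel₀ _ hb]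
    simp only [q, sub_comp, mul_comp, C_comp, X_comp, h, hc]
    ring
  have hp : p = C (c / b) * X + C (q.coeff 0) := by
    rw [← eq_C_of_natDegree_eq_zero (natDegree_eq_zero_of_comp_X_add_C_eq hb hq)]
    ring
  exact hp ▸ natDegree_linear_le

theorem derivative_eq_zero_of_eval_mul_exp_eq {A B G : ℂ[X]} (hA : A ≠ 0) (hB : B ≠ 0)
    (h : ∀ w, A.eval w * Complex.exp (G.eval w) = B.eval w) : derivative G = 0 := by
  have hderiv : ∀ w, (derivative B).eval w =
      ((derivative A).eval w + A.eval w * (derivative G).eval w) * Complex.exp (G.eval w) := by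
    intro w
    have hprod := (A.hasDerivAt w).mul (G.hasDerivAt w).cexp
    rw [show ((fun z => A.eval z) * fun z => Complex.exp (G.eval z)) = fun z => B.eval z by
      ext z; exact h z] at hprod
    rw [(B.hasDerivAt w).unique hprod]
    ring
  have hwronskian : wronskian A B = A * B * derivative G := by
    refine Polynomial.funext fun w => ?_
    simp only [wronskian, eval_sub, eval_mul, hderiv, ← h]
    ring
  by_contra hG
  have hlt := degree_wronskian_lt_add hA hB
  rw [hwronskian, degree_mul, degree_mul, degree_eq_natDegree hA, degree_eq_natDegree hB,
    degree_eq_natDegree hG] at hlt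
  norm_cast at hlt
  omega

theorem comp_eq_C_pow_mul_of_isCoprime {K : Type*} [Field K] {Q P : K[X]} {a b u : K}
    (hQ : Q.Monic) (hQP : IsCoprime Q P) (ha : a ≠ 0) (hu : u ≠ 0)
    (h : Q.comp (C a * X + C b) * P * C u = C a * Q * P.comp (C a * X + C b)) :
    Q.comp (C a * X + C b) = C (a ^ Q.natDegree) * Q := by
  have hdvd : Q ∣ Q.comp (C a * X + C b) :=
    hQP.dvd_of_dvd_mul_right <| (isUnit_C.mpr hu.isUnit).dvd_mul_right.mp
      ⟨C a * P.comp (C a * X + C b), by rw [h]; ring⟩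
  refine (eq_leadingCoeff_mul_of_monic_of_dvd_of_natDegree_le hQ hdvd
    (natDegree_comp_C_mul_X_add_C Q ha).le).trans ?_
  rw [leadingCoeff_comp_C_mul_X_add_C Q ha, hQ.leadingCoeff, one_mul]

theorem eq_pow_succ_and_comp_eq_C_pow_mul_of_C_mul_eq {K : Type*} [Field K] {P : K[X]}
    {a b u : K} (hP : P.Monic) (ha : a ≠ 0) (h : C u * P = C a * P.comp (C a * X + C b)) :
    u = a ^ (P.natDegree + 1) ∧ P.comp (C a * X + C b) = C (a ^ P.natDegree) * P := by
  have hu : u = a ^ (P.natDegree + 1) := by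
    simpa [leadingCoeff_comp_C_mul_X_add_C P ha, hP.leadingCoeff, pow_succ']
      using congrArg leadingCoeff h
  refine ⟨hu, mul_left_cancel₀ (C_ne_zero.mpr ha) ?_⟩
  rw [← h, hu, pow_succ', C_mul, mul_assoc]

end Polynomial

theorem LeavesInv.exists_comp_eq {Q P E : ℂ[X]} {a b : ℂ} (hinv : LeavesInv Q P E a b)
    (ha : a ≠ 0) (hQ : Q ≠ 0) (hP : P ≠ 0) :
    ∃ c, E.comp (C a * X + C b) = E + C c ∧
      Q.comp (C a * X + C b) * P * C (Complex.exp c) = C a * Q * P.comp (C a * X + C b) := by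
  have hexp : ∀ w, (Q.comp (C a * X + C b) * P).eval w *
      Complex.exp ((E.comp (C a * X + C b) - E).eval w) =
        (C a * Q * P.comp (C a * X + C b)).eval w := by
    intro w
    simp only [eval_mul, eval_sub, eval_comp, eval_add, eval_C, eval_X, Complex.exp_sub]
    field_simp
    linear_combination hinv w
  obtain ⟨c, hG⟩ : ∃ c, E.comp (C a * X + C b) - E = C c :=
    ⟨_, eq_C_of_derivative_eq_zero <| derivative_eq_zero_of_eval_mul_exp_eq
      (mul_ne_zero (comp_C_mul_X_add_C_ne_zero ha hQ) hP)
      (mul_ne_zero (mul_ne_zero (C_ne_zero.mpr ha) hQ) (comp_C_mul_X_add_C_ne_zero ha hP)) hexp⟩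
  refine ⟨c, by rw [← hG, add_sub_cancel], Polynomial.funext fun w => ?_⟩
  simpa [hG] using hexp w

theorem stmt5_general (s r d : ℕ) (h2 : 2 ≤ s + r + d)
    (hgcd : Int.gcd (d : ℤ) ((s : ℤ) - r - 1) = 1)
    (lam : ℂ) (Q P E : Polynomial ℂ) (hX : EData s r d lam Q P E)
    (a b : ℂ) (ha : a ≠ 0) (hinv : LeavesInv Q P E a b) :
    a = 1 ∧ b = 0 := by
  obtain ⟨-, hQ, hP, rfl, rfl, rfl, hroots⟩ := hX
  have hQP : IsCoprime Q P := (isCoprime_iff_aeval_ne_zero_of_isAlgClosed (k := ℂ) ℂ Q P).mpr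
    fun z => by simpa using not_and_or.mp (hroots z)
  obtain ⟨c, hE, hQPc⟩ := hinv.exists_comp_eq ha hQ.ne_zero hP.ne_zero
  have hQt := comp_eq_C_pow_mul_of_isCoprime hQ hQP ha (Complex.exp_ne_zero c) hQPc
  have hPu : C (a ^ Q.natDegree * Complex.exp c) * P = C a * P.comp (C a * X + C b) :=
    mul_left_cancel₀ hQ.ne_zero <| by
      rw [C_mul]; linear_combination hQPc - P * C (Complex.exp c) * hQt
  obtain ⟨hlead, hPt⟩ := eq_pow_succ_and_comp_eq_C_pow_mul_of_C_mul_eq hP ha hPu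
  have ha1 : a = 1 := by
    by_contra hne
    rw [eq_zero_of_comp_eq_add_C_of_ne_one hne hE, Complex.exp_zero, mul_one] at hlead
    refine hne (eq_one_of_zpow_eq_one_of_gcd_eq_one ha hgcd ?_ ?_)
    · exact_mod_cast pow_natDegree_eq_one_of_comp_eq_add_C ha hE
    · rw [sub_sub, zpow_sub₀ ha, div_eq_one_iff_eq (zpow_ne_zero _ ha)]
      exact_mod_cast hlead
  subst ha1
  refine ⟨rfl, by_contra fun hb => ?_⟩
  simp only [C_1, one_mul, one_pow] at hE hQt hPt
  have hs := natDegree_eq_zero_of_comp_X_add_C_eq hb hQt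
  have hr := natDegree_eq_zero_of_comp_X_add_C_eq hb hPt
  have hd := natDegree_le_one_of_comp_X_add_C_eq_add_C hb hE
  omega

/-- if `gcd(d, s−r−1) = 1` then every `X ∈ E(s,r,d)` has trivial
isotropy group: the only affine map leaving `X` invariant is the identity. -/
theorem stmt5 (s r d : ℕ) (hd : 1 ≤ d) (h2 : 2 ≤ s + r + d)
    (hgcd : Int.gcd (d : ℤ) ((s : ℤ) - r - 1) = 1)
    (lam : ℂ) (Q P E : Polynomial ℂ) (hX : EData s r d lam Q P E)
    (a b : ℂ) (ha : a ≠ 0) (hinv : LeavesInv Q P E a b) :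
    a = 1 ∧ b = 0 :=
  stmt5_general s r d h2 hgcd lam Q P E hX a b ha hinv
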